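/- With v_n as above, the kernel K_uni(x,y) = ∑_{n=1}^∞ ((−1)^n/⌈n/2⌉³) v_n(x) v_n(y) has the property that the series ∑_{n=1}^∞ ((−1)^n/⌈n/2⌉³) v_n(x)v_n(y) does not converge uniformly on [−1,1]×[−1,1]; specifically, for every m ≥ 1, sup_{x,y ∈ [−1,1]} |(1/m³) v_{2m}(x) v_{2m}(y)| > 4/3. -/

import Mathlib

/-!
At `θ = π / (2 (k + 1))` the identity `U_k(cos θ) sin θ = sin ((k + 1) θ)` gives
`Ũ_k(cos θ)² = 2 / (π sin θ) > 4 (k + 1) / π²`, since `sin θ < θ`. Pulling `cos θ` back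
into `I_m` through the affine map `i_m` and taking `k = 2m + 2` yields a point with
`v_{2m}(x)² > 2 m² (2m + 3) / 3`, so the `2m`-th term of the series exceeds `4/3` at
`(x, x)`. The terms therefore do not tend to `0` uniformly, and the partial sums are not
uniformly Cauchy.
-/

open MeasureTheory Polynomial Filter

/-- `leftPt m = -1 + (12/π²) ∑_{j=1}^m 1/j²`. -/
noncomputable def leftPt (m : ℕ) : ℝ :=
  -1 + (12 / Real.pi ^ 2) * ∑ j ∈ Finset.range m, 1 / ((j : ℝ) + 1) ^ 2

/-- The interval `I_m` (for `m ≥ 1`), of length `12/(π²m²)`. -/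
noncomputable def Iint (m : ℕ) : Set ℝ := Set.Ioo (leftPt (m - 1)) (leftPt m)

/-- The increasing affine bijection from `I_m` onto `[-1,1]`. -/
noncomputable def iMap (m : ℕ) (x : ℝ) : ℝ :=
  (Real.pi ^ 2 * (m : ℝ) ^ 2 / 6) * (x - leftPt (m - 1)) - 1

/-- `Ũ_k(t) = √(2/π) (1-t²)^{1/4} U_k(t)` with `U_k` the Chebyshev polynomial of the
second kind. -/
noncomputable def UTilde (k : ℕ) (t : ℝ) : ℝ :=
  Real.sqrt (2 / Real.pi) * (1 - t ^ 2) ^ ((1 : ℝ) / 4) *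
    (Polynomial.Chebyshev.U ℝ (k : ℤ)).eval t

/-- The orthonormal functions `v_n` (for `n ≥ 1`). -/
noncomputable def vfun (n : ℕ) : ℝ → ℝ :=
  let m := (n + 1) / 2
  if n % 2 = 1 then
    Set.indicator (Iint m) (fun x => -((m : ℝ) * Real.pi / Real.sqrt 6) * UTilde (2 * m) (iMap m x))
  else
    Set.indicator (Iint m) (fun x => ((m : ℝ) * Real.pi / Real.sqrt 6) * UTilde (2 * m + 2) (iMap m x))

open Finset Real

theorem not_tendstoUniformlyOn_sum_Icc {α E : Type*} [SeminormedAddCommGroup E]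
    {f : ℕ → α → E} {s : Set α} {ε : ℝ} (hε : 0 < ε)
    (hf : ∃ᶠ n in atTop, ∃ x ∈ s, ε ≤ ‖f n x‖) (F : α → E) :
    ¬ TendstoUniformlyOn (fun N x => ∑ n ∈ Icc 1 N, f n x) F atTop s := by
  intro hF
  obtain ⟨N, hN⟩ := Metric.uniformCauchySeqOn_iff.1 hF.uniformCauchySeqOn ε hε
  obtain ⟨n, hn, x, hx, hfx⟩ := frequently_atTop.1 hf (N + 1)
  obtain ⟨k, rfl⟩ : ∃ k, n = k + 1 := ⟨n - 1, by omega⟩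
  have hdist := hN (k + 1) (by omega) k (by omega) x hx
  rw [sum_Icc_succ_top (by omega), dist_eq_norm, add_sub_cancel_left] at hdist
  exact hdist.not_ge hfx

theorem leftPt_succ (m : ℕ) :
    leftPt (m + 1) = leftPt m + 12 / (π ^ 2 * ((m : ℝ) + 1) ^ 2) := by
  simp only [leftPt, sum_range_succ]
  field_simp
  ring

theorem neg_one_le_leftPt (m : ℕ) : -1 ≤ leftPt m := by
  have : 0 ≤ 12 / π ^ 2 * ∑ j ∈ range m, 1 / ((j : ℝ) + 1) ^ 2 := by positivity
  unfold leftPt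
  linarith

theorem leftPt_le_one (m : ℕ) : leftPt m ≤ 1 := by
  have hsum : ∑ j ∈ range m, 1 / ((j : ℝ) + 1) ^ 2 ≤ π ^ 2 / 6 := by
    calc ∑ j ∈ range m, 1 / ((j : ℝ) + 1) ^ 2
        = ∑ n ∈ range (m + 1), 1 / (n : ℝ) ^ 2 := by simp [sum_range_succ']
      _ ≤ π ^ 2 / 6 := sum_le_hasSum _ (fun _ _ => by positivity) hasSum_zeta_two
  have : 12 / π ^ 2 * ∑ j ∈ range m, 1 / ((j : ℝ) + 1) ^ 2 ≤ 2 := by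
    calc _ ≤ 12 / π ^ 2 * (π ^ 2 / 6) := by gcongr
      _ = 2 := by field_simp; norm_num
  unfold leftPt
  linarith

theorem Iint_subset_Icc (m : ℕ) : Iint m ⊆ Set.Icc (-1) 1 :=
  fun _ hx => ⟨(neg_one_le_leftPt _).trans hx.1.le, hx.2.le.trans (leftPt_le_one m)⟩

theorem exists_mem_Iint_iMap_eq {m : ℕ} (hm : 1 ≤ m) {t : ℝ} (ht : t ∈ Set.Ioo (-1) 1) :
    ∃ x ∈ Iint m, iMap m x = t := by
  obtain ⟨k, rfl⟩ : ∃ k, m = k + 1 := ⟨m - 1, by omega⟩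
  set c : ℝ := 6 / (π ^ 2 * ((k : ℝ) + 1) ^ 2) with hc_def
  have hc : 0 < c := by positivity
  have hright : leftPt (k + 1) = leftPt k + c * 2 := by rw [leftPt_succ, hc_def]; ring
  refine ⟨leftPt k + c * (t + 1), ⟨?_, ?_⟩, ?_⟩
  · simp only [Nat.add_sub_cancel]
    nlinarith [ht.1]
  · rw [hright]
    nlinarith [ht.2]
  · simp only [iMap, Nat.add_sub_cancel, hc_def]
    push_cast
    field_simp
    ring

theorem sq_UTilde_cos (k : ℕ) {θ : ℝ} (hθ : 0 < θ) (hθπ : θ < π) :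
    UTilde k (cos θ) ^ 2 = 2 / π * sin ((k + 1) * θ) ^ 2 / sin θ := by
  have hsin : 0 < sin θ := sin_pos_of_pos_of_lt_pi hθ hθπ
  have hweight : ((1 - cos θ ^ 2) ^ ((1 : ℝ) / 4)) ^ 2 = sin θ := by
    rw [← sin_sq, ← rpow_natCast, ← rpow_mul (by positivity), ← rpow_natCast,
      ← rpow_mul hsin.le]
    norm_num
  have hU : (Chebyshev.U ℝ (k : ℤ)).eval (cos θ) = sin ((k + 1) * θ) / sin θ := by
    rw [eq_div_iff hsin.ne', Chebyshev.U_real_cos]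
    push_cast
    rfl
  rw [UTilde, mul_pow, mul_pow, hweight, sq_sqrt (by positivity), hU]
  field_simp

theorem lt_sq_UTilde_cos (k : ℕ) :
    4 * (k + 1) / π ^ 2 < UTilde k (cos (π / (2 * (k + 1)))) ^ 2 := by
  set θ := π / (2 * ((k : ℝ) + 1))
  have hθ : 0 < θ := by positivity
  have hθπ : θ < π := div_lt_self pi_pos (by linarith [k.cast_nonneg (α := ℝ)])
  have hsin : 0 < sin θ := sin_pos_of_pos_of_lt_pi hθ hθπ
  have hpeak : sin ((k + 1) * θ) = 1 := by
    rw [show ((k : ℝ) + 1) * θ = π / 2 by simp only [θ]; field_simp, sin_pi_div_two]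
  rw [sq_UTilde_cos k hθ hθπ, hpeak, one_pow, mul_one, lt_div_iff₀ hsin]
  calc 4 * (k + 1) / π ^ 2 * sin θ < 4 * (k + 1) / π ^ 2 * θ := by gcongr; exact sin_lt hθ
    _ = 2 / π := by simp only [θ]; field_simp; ring

theorem vfun_two_mul (m : ℕ) : vfun (2 * m) = (Iint m).indicator
    fun x => (m * π / √6) * UTilde (2 * m + 2) (iMap m x) := by
  have hm : (2 * m + 1) / 2 = m := by omega
  simp [vfun, hm]

theorem exists_lt_sq_vfun_two_mul {m : ℕ} (hm : 1 ≤ m) :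
    ∃ x ∈ Set.Icc (-1 : ℝ) 1, 2 * m ^ 2 * (2 * m + 3) / 3 < vfun (2 * m) x ^ 2 := by
  set θ := π / (2 * ((2 * m + 2 : ℕ) + 1 : ℝ))
  have hθ : 0 < θ := by positivity
  have hθπ : θ < π := div_lt_self pi_pos (by push_cast; linarith [m.cast_nonneg (α := ℝ)])
  obtain ⟨x, hxI, hx⟩ := exists_mem_Iint_iMap_eq hm (t := cos θ)
    ⟨by simpa using cos_lt_cos_of_nonneg_of_le_pi hθ.le le_rfl hθπ,
      by simpa using cos_lt_cos_of_nonneg_of_le_pi le_rfl hθπ.le hθ⟩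
  refine ⟨x, Iint_subset_Icc m hxI, ?_⟩
  rw [vfun_two_mul, Set.indicator_of_mem hxI, hx, mul_pow, div_pow, mul_pow,
    sq_sqrt (by norm_num : (0 : ℝ) ≤ 6)]
  calc (2 * m ^ 2 * (2 * m + 3) / 3 : ℝ)
      = m ^ 2 * π ^ 2 / 6 * (4 * ((2 * m + 2 : ℕ) + 1) / π ^ 2) := by
        push_cast; field_simp; ring
    _ < m ^ 2 * π ^ 2 / 6 * UTilde (2 * m + 2) (cos θ) ^ 2 := by
        gcongr
        exact lt_sq_UTilde_cos _

theorem four_thirds_lt_abs_vfun_two_mul {m : ℕ} (hm : 1 ≤ m) :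
    ∃ x ∈ Set.Icc (-1 : ℝ) 1,
      4 / 3 < |1 / (m : ℝ) ^ 3 * (vfun (2 * m) x * vfun (2 * m) x)| := by
  obtain ⟨x, hx, hv⟩ := exists_lt_sq_vfun_two_mul hm
  refine ⟨x, hx, ?_⟩
  have hm0 : (0 : ℝ) < m := by exact_mod_cast hm
  rw [← sq, abs_of_nonneg (by positivity), one_div_mul_eq_div, lt_div_iff₀ (by positivity)]
  nlinarith

/-- The Mercer expansion `∑_{n≥1} ((-1)^n/⌈n/2⌉³) v_n(x) v_n(y)` of `K_uni` does not
converge uniformly on `[-1,1]²`; specifically, each even term has uniform norm `> 4/3`. -/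
theorem Kuni_not_uniform :
    (¬ ∃ F : ℝ × ℝ → ℝ, TendstoUniformlyOn
      (fun N : ℕ => fun p : ℝ × ℝ =>
        ∑ n ∈ Finset.Icc 1 N,
          ((-1 : ℝ) ^ n / (((n + 1) / 2 : ℕ) : ℝ) ^ 3) * vfun n p.1 * vfun n p.2)
      F atTop (Set.Icc (-1 : ℝ) 1 ×ˢ Set.Icc (-1 : ℝ) 1)) ∧
    (∀ m : ℕ, 1 ≤ m → ∃ x ∈ Set.Icc (-1 : ℝ) 1, ∃ y ∈ Set.Icc (-1 : ℝ) 1,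
      4 / 3 < |(1 / (m : ℝ) ^ 3) * (vfun (2 * m) x * vfun (2 * m) y)|) := by
  refine ⟨fun ⟨F, hF⟩ => not_tendstoUniformlyOn_sum_Icc (ε := 4 / 3) (by norm_num) ?_ F hF,
    fun m hm => ?_⟩
  · refine frequently_atTop.2 fun N => ⟨2 * (N + 1), by omega, ?_⟩
    obtain ⟨x, hx, hlt⟩ := four_thirds_lt_abs_vfun_two_mul (m := N + 1) (by omega)
    have hcoeff : (-1 : ℝ) ^ (2 * (N + 1)) / (((2 * (N + 1) + 1) / 2 : ℕ) : ℝ) ^ 3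
        = 1 / ((N + 1 : ℕ) : ℝ) ^ 3 := by
      rw [pow_mul, neg_one_sq, one_pow, show (2 * (N + 1) + 1) / 2 = N + 1 by omega]
    refine ⟨(x, x), ⟨hx, hx⟩, ?_⟩
    rw [Real.norm_eq_abs, hcoeff, mul_assoc]
    exact hlt.le
  · obtain ⟨x, hx, hlt⟩ := four_thirds_lt_abs_vfun_two_mul hm
    exact ⟨x, hx, x, hx, hlt⟩
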